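/- arXiv:1710.00567 — 5 statements merged into one kernel-verified Lean document; each statement's English description precedes it below -/
import Mathlib

section
/- Let 𝒢 be an infinite, locally finite rooted tree equipped with edge conductances c(e) = 1 for |e| = 1 and c(e) = Ψ(e)/(1 − ψ(e)) for |e| > 1, coming from weights (w_e, δ_e). For any collection of positive numbers (u_e)_{e∈E} such that Σ_{e : |e|=1} u_e = 1 and inf_{π∈Π} Σ_{e∈π} u_e c(e) > 0, there exists a nonzero flow on 𝒢 from ϱ to infinity whose energy is at most lim_{n→∞} max_{e : |e|=n} Σ_{g≤e} u_g. -/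
open MeasureTheory ENNReal
open scoped Classical

/-- An infinite, locally finite rooted tree, encoded via the parent map.
Every vertex reaches the root by iterating `parent`, the root is its own parent,
every vertex has finitely many children, and the vertex set is infinite. -/
structure RTree where
  V : Type
  root : V
  parent : V → V
  parent_root : parent root = root
  reaches_root : ∀ v : V, ∃ n : ℕ, parent^[n] v = root
  locallyFinite : ∀ v : V, Set.Finite {u : V | parent u = v ∧ u ≠ root}
  infinite : Infinite V

namespace RTree

variable (T : RTree)

/-- Edges are identified with their endpoint `e⁺` farther from the root;
the other endpoint is `e⁻ = parent e⁺`. -/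
abbrev Edge : Type := {v : T.V // v ≠ T.root}

/-- The generation of a vertex: its graph distance from the root. -/
noncomputable def depth (v : T.V) : ℕ := Nat.find (T.reaches_root v)

/-- The generation `|e|` of an edge, i.e. the generation of `e⁺`. -/
noncomputable def egen (e : T.Edge) : ℕ := T.depth e.val

/-- `g ≤ e` : the edge `g` lies on the unique self-avoiding path from the root to `e⁺`. -/
def edgeLE (g e : T.Edge) : Prop := ∃ n : ℕ, T.parent^[n] e.val = g.val

/-- `g < e` : `g ≤ e` and `g ≠ e`. -/
def edgeLT (g e : T.Edge) : Prop := T.edgeLE g e ∧ g ≠ e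

/-- An infinite self-avoiding path started at the root. -/
structure Ray where
  toFun : ℕ → T.V
  zero_eq : toFun 0 = T.root
  parent_eq : ∀ n : ℕ, T.parent (toFun (n + 1)) = toFun n
  ne_root : ∀ n : ℕ, toFun (n + 1) ≠ T.root

/-- The `(n+1)`-st edge crossed by a ray. -/
def Ray.edge {T : RTree} (ξ : T.Ray) (n : ℕ) : T.Edge := ⟨ξ.toFun (n + 1), ξ.ne_root n⟩

/-- A cutset: a set of edges crossed exactly once by every infinite self-avoiding
path started at the root. -/
def IsCutset (π : Set T.Edge) : Prop := ∀ ξ : T.Ray, ∃! n : ℕ, ξ.edge n ∈ π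

/-- The branching-ruin number
`br_r(𝒢) = sup { λ > 0 : inf_{π ∈ Π} Σ_{e ∈ π} |e|^{-λ} > 0 }`, an element of `[0,∞]`. -/
noncomputable def brr : ℝ≥0∞ :=
  sSup {x : ℝ≥0∞ | ∃ lam : ℝ, 0 < lam ∧ x = ENNReal.ofReal lam ∧
    0 < ⨅ (π : Set T.Edge) (_ : T.IsCutset π),
      ∑' e : π, ENNReal.ofReal ((T.egen e.val : ℝ) ^ (-lam))}

/-- The branching number
`br(𝒢) = sup { λ > 0 : inf_{π ∈ Π} Σ_{e ∈ π} λ^{-|e|} > 0 }`, an element of `[0,∞]`. -/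
noncomputable def brNum : ℝ≥0∞ :=
  sSup {x : ℝ≥0∞ | ∃ lam : ℝ, 0 < lam ∧ x = ENNReal.ofReal lam ∧
    0 < ⨅ (π : Set T.Edge) (_ : T.IsCutset π),
      ∑' e : π, ENNReal.ofReal (lam ^ (-(T.egen e.val : ℝ)))}

/-- The edge `e` has been crossed (in either direction) during the first `n` steps
of the discrete path `x`. -/
def crossedBefore (x : ℕ → T.V) (n : ℕ) (e : T.Edge) : Prop :=
  ∃ k, k < n ∧ ((x k = T.parent e.val ∧ x (k + 1) = e.val) ∨
                (x k = e.val ∧ x (k + 1) = T.parent e.val))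

/-- Current weight of edge `e` at time `n` for a walk with history `x`:
the initial weight `w e` if `e` has not yet been crossed, the reinforced weight `d e`
afterwards. -/
noncomputable def currentWeight (w d : T.Edge → ℝ) (x : ℕ → T.V) (n : ℕ) (e : T.Edge) : ℝ :=
  if T.crossedBefore x n e then d e else w e

/-- Transition probability at time `n`, given the history `x` up to time `n`, of jumping to
the vertex `μ`: the current weight of the edge between `x n` and `μ` (zero if there is none)
divided by the total current weight of the edges incident to `x n`. -/
noncomputable def transProb (w d : T.Edge → ℝ) (x : ℕ → T.V) (n : ℕ) (μ : T.V) : ℝ :=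
  (∑' e : {e : T.Edge // (e.val = μ ∧ T.parent e.val = x n) ∨ (e.val = x n ∧ T.parent e.val = μ)},
      T.currentWeight w d x n e.val) /
  (∑' e : {e : T.Edge // e.val = x n ∨ T.parent e.val = x n},
      T.currentWeight w d x n e.val)

/-- `X` (on the probability space `(Ω, P)`) is a generalized once-reinforced random walk
on `T` with initial weights `w` and reinforced weights `d`: it starts at the root and,
conditionally on its history, crosses an incident edge with probability proportional to the
current weight of that edge. -/
def IsGORRW (w d : T.Edge → ℝ) {Ω : Type} [MeasurableSpace Ω]
    (P : Measure Ω) (X : ℕ → Ω → T.V) : Prop :=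
  (∀ (n : ℕ) (v : T.V), MeasurableSet {ω | X n ω = v}) ∧
  P {ω | X 0 ω = T.root} = 1 ∧
  ∀ (n : ℕ) (x : ℕ → T.V) (μ : T.V),
    P ({ω | ∀ k ≤ n, X k ω = x k} ∩ {ω | X (n + 1) ω = μ}) =
      ENNReal.ofReal (T.transProb w d x n μ) * P {ω | ∀ k ≤ n, X k ω = x k}

/-- The walk is recurrent if it almost surely returns to the root. -/
def Recurrent {Ω : Type} [MeasurableSpace Ω] (P : Measure Ω) (X : ℕ → Ω → T.V) : Prop :=
  P {ω | ∃ n : ℕ, 0 < n ∧ X n ω = T.root} = 1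

/-- `ψ(e) = (Σ_{g<e} δ_g⁻¹) / (w_e⁻¹ + Σ_{g<e} δ_g⁻¹)`, with `ψ(e) = 1` when `|e| = 1`. -/
noncomputable def psi (w d : T.Edge → ℝ) (e : T.Edge) : ℝ :=
  if T.egen e = 1 then 1
  else (∑' g : {g : T.Edge // T.edgeLT g e}, (d g.val)⁻¹) /
       ((w e)⁻¹ + ∑' g : {g : T.Edge // T.edgeLT g e}, (d g.val)⁻¹)

/-- `Ψ(e) = Π_{g ≤ e} ψ(g)`. -/
noncomputable def bigPsi (w d : T.Edge → ℝ) (e : T.Edge) : ℝ :=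
  ∏ᶠ (g : T.Edge) (_ : T.edgeLE g e), T.psi w d g

/-- `RT(𝒢,X) = sup { λ > 0 : inf_{π ∈ Π} Σ_{e ∈ π} Ψ(e)^λ > 0 }`, an element of `[0,∞]`. -/
noncomputable def RTnum (w d : T.Edge → ℝ) : ℝ≥0∞ :=
  sSup {x : ℝ≥0∞ | ∃ lam : ℝ, 0 < lam ∧ x = ENNReal.ofReal lam ∧
    0 < ⨅ (π : Set T.Edge) (_ : T.IsCutset π),
      ∑' e : π, ENNReal.ofReal (T.bigPsi w d e.val ^ lam)}

/-- The modified conductances: `c(e) = 1` if `|e| = 1` and `c(e) = Ψ(e)/(1 - ψ(e))` else. -/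
noncomputable def conductance (w d : T.Edge → ℝ) (e : T.Edge) : ℝ :=
  if T.egen e = 1 then 1 else T.bigPsi w d e / (1 - T.psi w d e)

/-- A flow from the root to infinity: a nonnegative function on edges such that the amount
entering each edge equals the total amount leaving through its children edges. -/
def IsFlow (θ : T.Edge → ℝ) : Prop :=
  (∀ e : T.Edge, 0 ≤ θ e) ∧
  ∀ e : T.Edge, θ e = ∑' g : {g : T.Edge // T.parent g.val = e.val}, θ g.val

/-- A unit flow: a flow sending total mass one out of the root. -/
def IsUnitFlow (θ : T.Edge → ℝ) : Prop :=
  T.IsFlow θ ∧ ∑' e : {e : T.Edge // T.egen e = 1}, θ e.val = 1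

/-- The energy `Σ_e θ_e² / c(e)` of a flow `θ` with respect to conductances `c`. -/
noncomputable def energy (c θ : T.Edge → ℝ) : ℝ≥0∞ :=
  ∑' e : T.Edge, ENNReal.ofReal (θ e ^ 2 / c e)

end RTree

/-! Take the capacities `cap e = (u_e c(e))⁺`. The maximal flow `f` through an edge, the decreasing
limit of the maximal flows in the trees truncated at finite depth, satisfies `f ≤ cap` and
`f e ≤ Σ_{children g} f g`, so splitting it proportionally downwards gives a flow `θ ≤ cap`.
Each truncated maximal flow dominates the capacity of a cutset, so the strength of `θ` is at least
`inf_π Σ_{e∈π} u_e c(e) > 0`; it is at most `Σ_{|e|=1} u_e = 1` since `c = 1` on the first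
generation. Finally `θ_e² / c(e) ≤ θ_e u_e`, and by conservation
`Σ_{|g|<n} θ_g u_g ≤ Σ_{|e|=n} θ_e Σ_{g≤e} u_g ≤ strength(θ) · max_{|e|=n} Σ_{g≤e} u_g`. -/

open Filter Topology
open scoped NNReal

theorem tsum_subtype_eq_sum_of_iff {α M : Type*} [AddCommMonoid M] [TopologicalSpace M]
    {p : α → Prop} (s : Finset α) (h : ∀ x, x ∈ s ↔ p x) (f : α → M) :
    ∑' x : {x // p x}, f x = ∑ x ∈ s, f x :=
  ((Equiv.subtypeEquivRight h).tsum_eq fun x => f x).symm.trans (s.tsum_subtype f)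

theorem ofReal_sq_div_le_ofReal_mul {θ u c : ℝ} (hθ : 0 ≤ θ) (hu : 0 ≤ u)
    (h : θ ≤ max (u * c) 0) : ENNReal.ofReal (θ ^ 2 / c) ≤ ENNReal.ofReal (θ * u) := by
  rcases le_or_gt c 0 with hc | hc
  · rw [ENNReal.ofReal_of_nonpos (div_nonpos_of_nonneg_of_nonpos (sq_nonneg θ) hc)]
    exact bot_le
  · rw [max_eq_left (mul_nonneg hu hc.le)] at h
    refine ENNReal.ofReal_le_ofReal ((div_le_iff₀ hc).2 ?_)
    calc θ ^ 2 = θ * θ := sq θ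
      _ ≤ θ * (u * c) := mul_le_mul_of_nonneg_left h hθ
      _ = θ * u * c := (mul_assoc _ _ _).symm

namespace RTree

variable {T : RTree}

def IsAncestor (T : RTree) (v x : T.V) : Prop := ∃ n : ℕ, T.parent^[n] x = v

theorem iterate_parent_depth (v : T.V) : T.parent^[T.depth v] v = T.root :=
  Nat.find_spec (T.reaches_root v)

theorem iterate_parent_eq_root_iff {v : T.V} {n : ℕ} :
    T.parent^[n] v = T.root ↔ T.depth v ≤ n := by
  refine ⟨fun h => Nat.find_min' _ h, fun h => ?_⟩
  rw [← Nat.sub_add_cancel h, Function.iterate_add_apply, iterate_parent_depth]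
  exact Function.iterate_fixed T.parent_root _

theorem depth_eq_zero_iff {v : T.V} : T.depth v = 0 ↔ v = T.root := by
  rw [← Nat.le_zero, ← iterate_parent_eq_root_iff, Function.iterate_zero_apply]

theorem depth_root : T.depth T.root = 0 := depth_eq_zero_iff.2 rfl

theorem depth_parent (v : T.V) : T.depth (T.parent v) = T.depth v - 1 := by
  have h (n : ℕ) : T.depth v ≤ n + 1 ↔ T.depth (T.parent v) ≤ n := by
    rw [← iterate_parent_eq_root_iff, ← iterate_parent_eq_root_iff, Function.iterate_succ_apply]
  have h₁ := (h (T.depth (T.parent v))).2 le_rfl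
  have h₂ := (h (T.depth v - 1)).1 (by omega)
  omega

theorem depth_iterate_parent (n : ℕ) (v : T.V) :
    T.depth (T.parent^[n] v) = T.depth v - n := by
  induction n generalizing v with
  | zero => rfl
  | succ n ih => rw [Function.iterate_succ_apply, ih, depth_parent]; omega

theorem one_le_egen (e : T.Edge) : 1 ≤ T.egen e :=
  Nat.one_le_iff_ne_zero.2 fun h => e.2 (depth_eq_zero_iff.1 h)

theorem egen_eq_depth_parent_add_one (e : T.Edge) : T.egen e = T.depth (T.parent e.val) + 1 := by
  have := one_le_egen e
  rw [depth_parent]; unfold egen at this ⊢; omega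

theorem IsAncestor.iterate_parent_depth_sub {v x : T.V} (h : T.IsAncestor v x) :
    T.parent^[T.depth x - T.depth v] x = v := by
  obtain ⟨n, rfl⟩ := h
  by_cases hroot : T.parent^[n] x = T.root
  · rw [hroot, depth_root, Nat.sub_zero, iterate_parent_eq_root_iff]
  · have hn : n < T.depth x := lt_of_not_ge fun hn => hroot (iterate_parent_eq_root_iff.2 hn)
    rw [depth_iterate_parent, show T.depth x - (T.depth x - n) = n by omega]

theorem IsAncestor.depth_le {v x : T.V} (h : T.IsAncestor v x) : T.depth v ≤ T.depth x := by
  obtain ⟨n, rfl⟩ := h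
  rw [depth_iterate_parent]; omega

theorem IsAncestor.eq_of_depth_eq {v w x : T.V} (hv : T.IsAncestor v x) (hw : T.IsAncestor w x)
    (h : T.depth v = T.depth w) : v = w := by
  rw [← hv.iterate_parent_depth_sub, ← hw.iterate_parent_depth_sub, h]

theorem isAncestor_root (x : T.V) : T.IsAncestor T.root x := T.reaches_root x

theorem edgeLE_refl (e : T.Edge) : T.edgeLE e e := ⟨0, rfl⟩

theorem edgeLE_trans {a b c : T.Edge} (hab : T.edgeLE a b) (hbc : T.edgeLE b c) :
    T.edgeLE a c := by
  obtain ⟨n, hn⟩ := hab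
  obtain ⟨m, hm⟩ := hbc
  exact ⟨n + m, by rw [Function.iterate_add_apply, hm, hn]⟩

theorem edgeLE_of_parent_eq {c e : T.Edge} (h : T.parent c.val = e.val) : T.edgeLE e c :=
  ⟨1, h⟩

theorem egen_le_of_edgeLE {g e : T.Edge} (h : T.edgeLE g e) : T.egen g ≤ T.egen e :=
  IsAncestor.depth_le h

theorem eq_of_edgeLE_of_egen_eq {g g' e : T.Edge} (hg : T.edgeLE g e) (hg' : T.edgeLE g' e)
    (h : T.egen g = T.egen g') : g = g' :=
  Subtype.ext (IsAncestor.eq_of_depth_eq hg hg' h)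

theorem egen_of_parent_eq {g : T.Edge} {v : T.V} (h : T.parent g.val = v) :
    T.egen g = T.depth v + 1 := h ▸ egen_eq_depth_parent_add_one g

theorem edgeLE_iff_of_parent_eq {g c e : T.Edge} (h : T.parent c.val = e.val) :
    T.edgeLE g c ↔ g = c ∨ T.edgeLE g e := by
  constructor
  · rintro ⟨_ | n, hn⟩
    · exact Or.inl (Subtype.ext hn).symm
    · exact Or.inr ⟨n, by rwa [Function.iterate_succ_apply, h] at hn⟩
  · rintro (rfl | hge)
    · exact edgeLE_refl g
    · exact edgeLE_trans hge (edgeLE_of_parent_eq h)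

theorem not_edgeLE_of_parent_eq {c e : T.Edge} (h : T.parent c.val = e.val) :
    ¬ T.edgeLE c e := fun hce => by
  have := egen_le_of_edgeLE hce
  rw [egen_of_parent_eq h] at this
  unfold egen at this
  omega

namespace Ray

theorem depth_toFun (ξ : T.Ray) (n : ℕ) : T.depth (ξ.toFun n) = n := by
  induction n with
  | zero => rw [ξ.zero_eq, depth_root]
  | succ n ih =>
    have h := egen_eq_depth_parent_add_one (ξ.edge n)
    rwa [edge, ξ.parent_eq, ih] at h

theorem iterate_parent_toFun (ξ : T.Ray) (k m : ℕ) :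
    T.parent^[k] (ξ.toFun m) = ξ.toFun (m - k) := by
  induction k with
  | zero => rfl
  | succ k ih =>
    rw [Function.iterate_succ_apply', ih]
    rcases Nat.eq_zero_or_eq_succ_pred (m - k) with h | h
    · rw [h, show m - (k + 1) = 0 by omega, ξ.zero_eq, T.parent_root]
    · rw [h, ξ.parent_eq, Nat.pred_eq_sub_one, Nat.sub_sub]

theorem toFun_depth_of_isAncestor (ξ : T.Ray) {v : T.V} {m : ℕ}
    (h : T.IsAncestor v (ξ.toFun m)) : ξ.toFun (T.depth v) = v := by
  obtain ⟨k, rfl⟩ := h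
  rw [iterate_parent_toFun, depth_toFun]

end Ray

def CutsBelow (T : RTree) (v : T.V) (S : Set T.Edge) : Prop :=
  ∀ ξ : T.Ray, ξ.toFun (T.depth v) = v → ∃! n : ℕ, ξ.edge n ∈ S

theorem isCutset_iff_cutsBelow_root {π : Set T.Edge} : T.IsCutset π ↔ T.CutsBelow T.root π := by
  simp only [IsCutset, CutsBelow, depth_root, Ray.zero_eq, forall_const]

theorem cutsBelow_singleton (e : T.Edge) : T.CutsBelow e.val {e} := by
  intro ξ hξ
  have hdepth {n : ℕ} : ξ.edge n = e ↔ n + 1 = T.egen e := by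
    refine ⟨fun h => ?_, fun h => Subtype.ext ?_⟩
    · rw [← h, egen, Ray.edge, ξ.depth_toFun]
    · exact (congrArg ξ.toFun h).trans hξ
  refine ⟨T.egen e - 1, hdepth.2 (by have := one_le_egen e; omega), fun n hn => ?_⟩
  have := hdepth.1 hn
  omega

noncomputable def childEdges (T : RTree) (v : T.V) : Finset T.Edge :=
  ((T.locallyFinite v).preimage Subtype.val_injective.injOn).toFinset

@[simp] theorem mem_childEdges {v : T.V} {g : T.Edge} :
    g ∈ T.childEdges v ↔ T.parent g.val = v := by
  simp [childEdges, g.2]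

theorem cutsBelow_biUnion {v : T.V} {S : T.Edge → Finset T.Edge}
    (hS : ∀ g ∈ T.childEdges v, T.CutsBelow g.val (S g) ∧ ∀ s ∈ S g, T.edgeLE g s) :
    T.CutsBelow v ↑((T.childEdges v).biUnion S) := by
  intro ξ hξ
  set g₀ := ξ.edge (T.depth v)
  have hg₀ : g₀ ∈ T.childEdges v := mem_childEdges.2 ((ξ.parent_eq _).trans hξ)
  have hξg₀ : ξ.toFun (T.depth g₀.val) = g₀.val := congrArg ξ.toFun (ξ.depth_toFun _)
  obtain ⟨n, hn, huniq⟩ := (hS g₀ hg₀).1 ξ hξg₀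
  refine ⟨n, Finset.mem_biUnion.2 ⟨g₀, hg₀, hn⟩, fun m hm => ?_⟩
  obtain ⟨g, hg, hm⟩ := Finset.mem_biUnion.1 hm
  have hgξ : ξ.toFun (T.depth g.val) = g.val :=
    ξ.toFun_depth_of_isAncestor ((hS g hg).2 _ hm)
  have hgg₀ : g = g₀ := Subtype.ext <| by
    rw [← hgξ, ← hξg₀, ← egen, ← egen, egen_of_parent_eq (mem_childEdges.1 hg),
      egen_of_parent_eq (mem_childEdges.1 hg₀)]
  exact huniq m (hgg₀ ▸ hm)

theorem finite_setOf_depth_eq (n : ℕ) : {v : T.V | T.depth v = n}.Finite := by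
  induction n with
  | zero => exact (Set.finite_singleton T.root).subset fun v hv => depth_eq_zero_iff.1 hv
  | succ n ih =>
    refine (ih.biUnion fun u _ => T.locallyFinite u).subset fun v hv => ?_
    have hv' : v ≠ T.root := fun h => by simp [h, depth_root] at hv
    refine Set.mem_biUnion (x := T.parent v) ?_ ⟨rfl, hv'⟩
    have := egen_eq_depth_parent_add_one ⟨v, hv'⟩
    simp only [egen, Set.mem_ofPred_eq] at hv this ⊢
    omega

noncomputable def edgesAt (T : RTree) (n : ℕ) : Finset T.Edge :=
  ((finite_setOf_depth_eq n).preimage Subtype.val_injective.injOn).toFinset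

@[simp] theorem mem_edgesAt {n : ℕ} {e : T.Edge} : e ∈ T.edgesAt n ↔ T.egen e = n := by
  simp [edgesAt, egen]

theorem childEdges_root : T.childEdges T.root = T.edgesAt 1 := by
  ext g
  rw [mem_childEdges, mem_edgesAt, egen_eq_depth_parent_add_one, ← depth_eq_zero_iff]
  omega

theorem finite_setOf_edgeLE (e : T.Edge) : {g : T.Edge | T.edgeLE g e}.Finite :=
  ((Set.finite_Iic (T.egen e)).biUnion fun n _ => (T.edgesAt n).finite_toSet).subset
    fun _ hg => Set.mem_biUnion (egen_le_of_edgeLE hg) (mem_edgesAt.2 rfl)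

noncomputable def ancestors (T : RTree) (e : T.Edge) : Finset T.Edge :=
  (finite_setOf_edgeLE e).toFinset

@[simp] theorem mem_ancestors {g e : T.Edge} : g ∈ T.ancestors e ↔ T.edgeLE g e :=
  Set.Finite.mem_toFinset _

theorem ancestors_erase_of_parent_eq {c e : T.Edge} (h : T.parent c.val = e.val) :
    (T.ancestors c).erase c = T.ancestors e := by
  ext g
  rw [Finset.mem_erase, mem_ancestors, mem_ancestors, edgeLE_iff_of_parent_eq h]
  constructor
  · rintro ⟨hne, rfl | hge⟩
    · exact absurd rfl hne
    · exact hge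
  · intro hge
    exact ⟨fun hgc => not_edgeLE_of_parent_eq h (hgc ▸ hge), Or.inr hge⟩

theorem ancestors_erase_of_egen_eq_one {e : T.Edge} (he : T.egen e = 1) :
    (T.ancestors e).erase e = ∅ := by
  refine Finset.eq_empty_of_forall_notMem fun g hg => ?_
  rw [Finset.mem_erase, mem_ancestors] at hg
  have := eq_of_edgeLE_of_egen_eq hg.2 (edgeLE_refl e)
    (le_antisymm (he ▸ egen_le_of_edgeLE hg.2) (he ▸ one_le_egen g))
  exact hg.1 this

theorem pairwiseDisjoint_childEdges (s : Set T.Edge) :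
    s.PairwiseDisjoint fun e => T.childEdges e.val :=
  fun _ _ _ _ hne => Finset.disjoint_left.2 fun _ h₁ h₂ =>
    hne (Subtype.ext ((mem_childEdges.1 h₁).symm.trans (mem_childEdges.1 h₂)))

section MaxFlow

variable (cap : T.Edge → ℝ≥0)

/-- Maximal flow through `e` with capacities `cap` when the tree is cut off `k` generations
below `e`. -/
noncomputable def truncFlow (T : RTree) (cap : T.Edge → ℝ≥0) : ℕ → T.Edge → ℝ≥0
  | 0 => cap
  | k + 1 => fun e => min (cap e) (∑ g ∈ T.childEdges e.val, truncFlow T cap k g)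

theorem truncFlow_succ_le (k : ℕ) (e : T.Edge) :
    T.truncFlow cap (k + 1) e ≤ T.truncFlow cap k e := by
  induction k generalizing e with
  | zero => exact min_le_left _ _
  | succ k ih => exact min_le_min le_rfl (Finset.sum_le_sum fun g _ => ih g)

noncomputable def maxFlow (T : RTree) (cap : T.Edge → ℝ≥0) (e : T.Edge) : ℝ≥0 :=
  ⨅ k, T.truncFlow cap k e

theorem tendsto_truncFlow (e : T.Edge) :
    Tendsto (T.truncFlow cap · e) atTop (𝓝 (T.maxFlow cap e)) :=
  tendsto_atTop_ciInf (antitone_nat_of_succ_le fun k => truncFlow_succ_le cap k e)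
    (OrderBot.bddBelow _)

theorem maxFlow_le_cap (e : T.Edge) : T.maxFlow cap e ≤ cap e :=
  ciInf_le (OrderBot.bddBelow _) 0

theorem maxFlow_le_sum_childEdges (e : T.Edge) :
    T.maxFlow cap e ≤ ∑ g ∈ T.childEdges e.val, T.maxFlow cap g :=
  le_of_tendsto_of_tendsto' ((tendsto_truncFlow cap e).comp (tendsto_add_atTop_nat 1))
    (tendsto_finsetSum _ fun g _ => tendsto_truncFlow cap g) fun _ => min_le_right _ _

theorem exists_cutsBelow_sum_le_sum_childEdges {v : T.V} {a : T.Edge → ℝ≥0}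
    (h : ∀ g ∈ T.childEdges v, ∃ S : Finset T.Edge,
      T.CutsBelow g.val S ∧ (∀ s ∈ S, T.edgeLE g s) ∧ ∑ s ∈ S, cap s ≤ a g) :
    ∃ S : Finset T.Edge, T.CutsBelow v S ∧ (∀ s ∈ S, ∃ g ∈ T.childEdges v, T.edgeLE g s) ∧
      ∑ s ∈ S, cap s ≤ ∑ g ∈ T.childEdges v, a g := by
  choose! S hcut hbelow hsum using h
  refine ⟨(T.childEdges v).biUnion S, cutsBelow_biUnion fun g hg => ⟨hcut g hg, hbelow g hg⟩,
    fun s hs => ?_, ?_⟩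
  · obtain ⟨g, hg, hs⟩ := Finset.mem_biUnion.1 hs
    exact ⟨g, hg, hbelow g hg s hs⟩
  · have hdisj : (T.childEdges v : Set T.Edge).PairwiseDisjoint S :=
      fun g₁ h₁ g₂ h₂ hne => Finset.disjoint_left.2 fun s hs₁ hs₂ =>
        hne <| eq_of_edgeLE_of_egen_eq (hbelow g₁ h₁ s hs₁) (hbelow g₂ h₂ s hs₂) <| by
          rw [egen_of_parent_eq (mem_childEdges.1 h₁), egen_of_parent_eq (mem_childEdges.1 h₂)]
    rw [Finset.sum_biUnion hdisj]
    exact Finset.sum_le_sum hsum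

theorem exists_cutsBelow_sum_le_truncFlow (k : ℕ) (e : T.Edge) :
    ∃ S : Finset T.Edge, T.CutsBelow e.val S ∧ (∀ s ∈ S, T.edgeLE e s) ∧
      ∑ s ∈ S, cap s ≤ T.truncFlow cap k e := by
  have hsingle (e : T.Edge) : T.CutsBelow e.val ↑({e} : Finset T.Edge) ∧
      (∀ s ∈ ({e} : Finset T.Edge), T.edgeLE e s) ∧ ∑ s ∈ {e}, cap s = cap e := by
    refine ⟨by simpa using cutsBelow_singleton e, ?_, Finset.sum_singleton _ _⟩
    simpa using edgeLE_refl e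
  induction k generalizing e with
  | zero => exact ⟨{e}, (hsingle e).1, (hsingle e).2.1, (hsingle e).2.2.le⟩
  | succ k ih =>
    rcases le_total (cap e) (∑ g ∈ T.childEdges e.val, T.truncFlow cap k g) with h | h
    · exact ⟨{e}, (hsingle e).1, (hsingle e).2.1, (hsingle e).2.2.trans_le (le_min le_rfl h)⟩
    · obtain ⟨S, hcut, hbelow, hsum⟩ :=
        exists_cutsBelow_sum_le_sum_childEdges cap fun g _ => ih g
      refine ⟨S, hcut, fun s hs => ?_, hsum.trans (le_min h le_rfl)⟩
      obtain ⟨g, hg, hgs⟩ := hbelow s hs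
      exact edgeLE_trans (edgeLE_of_parent_eq (mem_childEdges.1 hg)) hgs

theorem exists_isCutset_sum_le (k : ℕ) : ∃ S : Finset T.Edge,
    T.IsCutset ↑S ∧ ∑ s ∈ S, cap s ≤ ∑ g ∈ T.edgesAt 1, T.truncFlow cap k g := by
  obtain ⟨S, hcut, -, hsum⟩ := exists_cutsBelow_sum_le_sum_childEdges cap (v := T.root)
    fun g _ => exists_cutsBelow_sum_le_truncFlow cap k g
  exact ⟨S, isCutset_iff_cutsBelow_root.2 hcut, childEdges_root ▸ hsum⟩

/-- The nontrivial half of max-flow min-cut. -/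
theorem iInf_isCutset_le_sum_maxFlow :
    ⨅ (π : Set T.Edge) (_ : T.IsCutset π), ∑' e : π, (cap e : ℝ≥0∞) ≤
      ((∑ g ∈ T.edgesAt 1, T.maxFlow cap g : ℝ≥0) : ℝ≥0∞) := by
  refine ge_of_tendsto ((ENNReal.continuous_coe.tendsto _).comp
    (tendsto_finsetSum _ fun g _ => tendsto_truncFlow cap g)) (Eventually.of_forall fun k => ?_)
  obtain ⟨S, hcut, hsum⟩ := exists_isCutset_sum_le cap k
  calc ⨅ (π : Set T.Edge) (_ : T.IsCutset π), ∑' e : π, (cap e : ℝ≥0∞)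
      ≤ ∑' e : (S : Set T.Edge), (cap e : ℝ≥0∞) := iInf₂_le _ hcut
    _ = ((∑ s ∈ S, cap s : ℝ≥0) : ℝ≥0∞) := by
      rw [Finset.tsum_subtype' S fun s => (cap s : ℝ≥0∞), ENNReal.ofNNReal_finsetSum]
    _ ≤ _ := ENNReal.coe_le_coe.2 hsum

end MaxFlow

section SplitFlow

variable {f : T.Edge → ℝ≥0}

/-- The flow which sends `f e` through each first-generation edge `e` and splits what reaches
`e⁺` among the children `g` of `e` in proportion to `f g`. -/
noncomputable def splitFlow (T : RTree) (f : T.Edge → ℝ≥0) (e : T.Edge) : ℝ≥0 :=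
  f e * ∏ g ∈ (T.ancestors e).erase e, f g / ∑ h ∈ T.childEdges g.val, f h

theorem splitFlow_le (hf : ∀ e, f e ≤ ∑ g ∈ T.childEdges e.val, f g) (e : T.Edge) :
    T.splitFlow f e ≤ f e :=
  mul_le_of_le_one_right zero_le
    (Finset.prod_le_one' fun g _ => div_le_one_of_le₀ (hf g) zero_le)

theorem splitFlow_of_egen_eq_one {e : T.Edge} (he : T.egen e = 1) : T.splitFlow f e = f e := by
  rw [splitFlow, ancestors_erase_of_egen_eq_one he, Finset.prod_empty, mul_one]

theorem sum_childEdges_splitFlow (hf : ∀ e, f e ≤ ∑ g ∈ T.childEdges e.val, f g) (e : T.Edge) :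
    ∑ c ∈ T.childEdges e.val, T.splitFlow f c = T.splitFlow f e := by
  set ratio := fun g : T.Edge => f g / ∑ h ∈ T.childEdges g.val, f h
  have hcancel : (∑ c ∈ T.childEdges e.val, f c) * ratio e = f e := by
    rcases eq_or_ne (∑ c ∈ T.childEdges e.val, f c) 0 with h0 | h0
    · rw [h0, zero_mul]; exact (nonpos_iff_eq_zero.1 (h0 ▸ hf e)).symm
    · exact mul_div_cancel₀ _ h0
  calc ∑ c ∈ T.childEdges e.val, T.splitFlow f c
      = ∑ c ∈ T.childEdges e.val, f c * ∏ g ∈ T.ancestors e, ratio g :=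
        Finset.sum_congr rfl fun c hc => by
          rw [splitFlow, ancestors_erase_of_parent_eq (mem_childEdges.1 hc)]
    _ = (∑ c ∈ T.childEdges e.val, f c) * ratio e * ∏ g ∈ (T.ancestors e).erase e, ratio g := by
        rw [← Finset.sum_mul, mul_assoc,
          Finset.mul_prod_erase _ _ (mem_ancestors.2 (edgeLE_refl e))]
    _ = T.splitFlow f e := by rw [hcancel]; rfl

theorem isFlow_splitFlow (hf : ∀ e, f e ≤ ∑ g ∈ T.childEdges e.val, f g) :
    T.IsFlow fun e => (T.splitFlow f e : ℝ) := by
  refine ⟨fun e => NNReal.coe_nonneg _, fun e => ?_⟩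
  rw [tsum_subtype_eq_sum_of_iff _ (fun _ => mem_childEdges) fun g => (T.splitFlow f g : ℝ),
    ← NNReal.coe_sum, sum_childEdges_splitFlow hf]

end SplitFlow

theorem filter_edgesAt_depth_add_one (v : T.V) :
    (T.edgesAt (T.depth v + 1)).filter (fun e => T.IsAncestor v e.val) = T.childEdges v := by
  ext e
  rw [Finset.mem_filter, mem_edgesAt, mem_childEdges, egen_eq_depth_parent_add_one]
  refine ⟨fun ⟨hd, hv⟩ => ?_, fun h => ⟨by rw [h], 1, h⟩⟩
  have h := hv.iterate_parent_depth_sub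
  rwa [← egen, egen_eq_depth_parent_add_one, hd, Nat.add_sub_cancel_left,
    Function.iterate_one] at h

theorem filter_edgesAt_succ {v : T.V} {m : ℕ} (hm : T.depth v < m) :
    (T.edgesAt (m + 1)).filter (fun e => T.IsAncestor v e.val) =
      ((T.edgesAt m).filter (fun e => T.IsAncestor v e.val)).biUnion
        fun e => T.childEdges e.val := by
  ext c
  simp only [Finset.mem_filter, mem_edgesAt, Finset.mem_biUnion, mem_childEdges]
  constructor
  · rintro ⟨hc, hv⟩
    have hp : T.parent c.val ≠ T.root := fun h => by
      have := egen_eq_depth_parent_add_one c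
      rw [h, depth_root] at this
      omega
    have hvp := hv.iterate_parent_depth_sub
    rw [← egen, hc, show m + 1 - T.depth v = (m - T.depth v) + 1 by omega,
      Function.iterate_succ_apply] at hvp
    refine ⟨⟨T.parent c.val, hp⟩, ⟨?_, _, hvp⟩, rfl⟩
    show T.depth (T.parent c.val) = m
    have := egen_eq_depth_parent_add_one c
    omega
  · rintro ⟨e, ⟨he, n, hn⟩, hc⟩
    refine ⟨by rw [egen_of_parent_eq hc, ← egen, he], n + 1, ?_⟩
    rw [Function.iterate_succ_apply, hc, hn]

section Flow

variable {θ : T.Edge → ℝ}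

theorem IsFlow.eq_sum_childEdges (hθ : T.IsFlow θ) (e : T.Edge) :
    θ e = ∑ g ∈ T.childEdges e.val, θ g :=
  (hθ.2 e).trans (tsum_subtype_eq_sum_of_iff _ (fun _ => mem_childEdges) θ)

theorem IsFlow.sum_childEdges_eq_sum_filter_edgesAt (hθ : T.IsFlow θ) (v : T.V) {m : ℕ}
    (hm : T.depth v < m) :
    ∑ g ∈ T.childEdges v, θ g =
      ∑ e ∈ (T.edgesAt m).filter (fun e => T.IsAncestor v e.val), θ e := by
  induction m, hm using Nat.le_induction with
  | base => rw [filter_edgesAt_depth_add_one]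
  | succ m hm ih =>
    rw [filter_edgesAt_succ hm, Finset.sum_biUnion (pairwiseDisjoint_childEdges _), ih]
    exact Finset.sum_congr rfl fun e _ => hθ.eq_sum_childEdges e

theorem IsFlow.sum_edgesAt (hθ : T.IsFlow θ) {m : ℕ} (hm : 1 ≤ m) :
    ∑ e ∈ T.edgesAt m, θ e = ∑ e ∈ T.edgesAt 1, θ e := by
  rw [← childEdges_root, hθ.sum_childEdges_eq_sum_filter_edgesAt T.root (by rwa [depth_root]),
    Finset.filter_true_of_mem fun e _ => isAncestor_root e.val]

theorem IsFlow.eq_sum_filter_edgesAt (hθ : T.IsFlow θ) {g : T.Edge} {m : ℕ}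
    (hg : T.egen g < m) : θ g = ∑ e ∈ (T.edgesAt m).filter (T.edgeLE g), θ e :=
  (hθ.eq_sum_childEdges g).trans (hθ.sum_childEdges_eq_sum_filter_edgesAt g.val hg)

theorem IsFlow.sum_mul_le (hθ : T.IsFlow θ) {u : T.Edge → ℝ} (hu : ∀ e, 0 ≤ u e)
    {A : Finset T.Edge} {m : ℕ} (hA : ∀ g ∈ A, T.egen g < m) :
    ∑ g ∈ A, θ g * u g ≤ ∑ e ∈ T.edgesAt m, θ e * ∑ g ∈ T.ancestors e, u g := by
  calc ∑ g ∈ A, θ g * u g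
      = ∑ g ∈ A, ∑ e ∈ (T.edgesAt m).filter (T.edgeLE g), θ e * u g :=
        Finset.sum_congr rfl fun g hg => by rw [hθ.eq_sum_filter_edgesAt (hA g hg), Finset.sum_mul]
    _ = ∑ e ∈ T.edgesAt m, ∑ g ∈ A.filter (T.edgeLE · e), θ e * u g :=
        Finset.sum_comm' fun g e => by simp only [Finset.mem_filter]; tauto
    _ ≤ ∑ e ∈ T.edgesAt m, ∑ g ∈ T.ancestors e, θ e * u g :=
        Finset.sum_le_sum fun e _ => Finset.sum_le_sum_of_subset_of_nonneg
          (fun g hg => mem_ancestors.2 (Finset.mem_filter.1 hg).2)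
          fun g _ _ => mul_nonneg (hθ.1 e) (hu g)
    _ = ∑ e ∈ T.edgesAt m, θ e * ∑ g ∈ T.ancestors e, u g := by simp only [Finset.mul_sum]

noncomputable def maxPathSum (T : RTree) (u : T.Edge → ℝ) (n : ℕ) : ℝ≥0∞ :=
  ⨆ (e : T.Edge) (_ : T.egen e = n), ∑' g : {g : T.Edge // T.edgeLE g e}, ENNReal.ofReal (u g.val)

theorem IsFlow.sum_ofReal_mul_le (hθ : T.IsFlow θ) {u : T.Edge → ℝ} (hu : ∀ e, 0 ≤ u e)
    {A : Finset T.Edge} {m : ℕ} (hA : ∀ g ∈ A, T.egen g < m) :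
    ∑ g ∈ A, ENNReal.ofReal (θ g * u g) ≤
      ENNReal.ofReal (∑ e ∈ T.edgesAt 1, θ e) * T.maxPathSum u m := by
  have hpath : ∀ e ∈ T.edgesAt m, ENNReal.ofReal (∑ g ∈ T.ancestors e, u g) ≤ T.maxPathSum u m :=
    fun e he => le_iSup₂_of_le e (mem_edgesAt.1 he) <| by
      rw [ENNReal.ofReal_sum_of_nonneg fun g _ => hu g,
        tsum_subtype_eq_sum_of_iff _ (fun _ => mem_ancestors) fun g => ENNReal.ofReal (u g)]
  rcases A.eq_empty_or_nonempty with rfl | ⟨g, hg⟩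
  · simp
  have hm : 1 ≤ m := (one_le_egen g).trans (hA g hg).le
  calc ∑ g ∈ A, ENNReal.ofReal (θ g * u g)
      = ENNReal.ofReal (∑ g ∈ A, θ g * u g) :=
        (ENNReal.ofReal_sum_of_nonneg fun g _ => mul_nonneg (hθ.1 g) (hu g)).symm
    _ ≤ ENNReal.ofReal (∑ e ∈ T.edgesAt m, θ e * ∑ g ∈ T.ancestors e, u g) :=
        ENNReal.ofReal_le_ofReal (hθ.sum_mul_le hu hA)
    _ = ∑ e ∈ T.edgesAt m, ENNReal.ofReal (θ e) * ENNReal.ofReal (∑ g ∈ T.ancestors e, u g) := by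
        rw [ENNReal.ofReal_sum_of_nonneg fun e _ =>
          mul_nonneg (hθ.1 e) (Finset.sum_nonneg fun g _ => hu g)]
        exact Finset.sum_congr rfl fun e _ => ENNReal.ofReal_mul (hθ.1 e)
    _ ≤ ∑ e ∈ T.edgesAt m, ENNReal.ofReal (θ e) * T.maxPathSum u m :=
        Finset.sum_le_sum fun e he => mul_le_mul_right (hpath e he) _
    _ = ENNReal.ofReal (∑ e ∈ T.edgesAt 1, θ e) * T.maxPathSum u m := by
        rw [← Finset.sum_mul, ← ENNReal.ofReal_sum_of_nonneg fun e _ => hθ.1 e, hθ.sum_edgesAt hm]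

theorem IsFlow.energy_le (hθ : T.IsFlow θ) {c u : T.Edge → ℝ} (hu : ∀ e, 0 ≤ u e)
    (hcap : ∀ e, θ e ≤ max (u e * c e) 0) :
    T.energy c θ ≤
      ENNReal.ofReal (∑ e ∈ T.edgesAt 1, θ e) * limsup (T.maxPathSum u) atTop := by
  refine (ENNReal.tsum_le_tsum fun e =>
    ofReal_sq_div_le_ofReal_mul (hθ.1 e) (hu e) (hcap e)).trans ?_
  rw [ENNReal.tsum_eq_iSup_sum, ← ENNReal.limsup_const_mul_of_ne_top ENNReal.ofReal_ne_top]
  refine iSup_le fun A => le_limsup_of_frequently_le (Eventually.frequently ?_)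
  filter_upwards [eventually_gt_atTop (A.sup T.egen)] with m hm
  exact hθ.sum_ofReal_mul_le hu fun g hg => (Finset.le_sup hg).trans_lt hm

end Flow

end RTree

open RTree

theorem stmt11_general (T : RTree) (w d : T.Edge → ℝ)
    (u : T.Edge → ℝ) (hu : ∀ e, 0 < u e)
    (husum : (∑' e : {e : T.Edge // T.egen e = 1}, u e.val) = 1)
    (hinf : 0 < ⨅ (π : Set T.Edge) (_ : T.IsCutset π),
        ∑' e : π, ENNReal.ofReal (u e.val * T.conductance w d e.val)) :
    ∃ θ : T.Edge → ℝ, T.IsFlow θ ∧ θ ≠ 0 ∧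
      T.energy (T.conductance w d) θ ≤
        Filter.limsup (fun n : ℕ =>
          ⨆ (e : T.Edge) (_ : T.egen e = n),
            ∑' g : {g : T.Edge // T.edgeLE g e}, ENNReal.ofReal (u g.val))
          Filter.atTop := by
  set cap : T.Edge → ℝ≥0 := fun e => (u e * T.conductance w d e).toNNReal
  set f := T.maxFlow cap
  have hf : ∀ e, f e ≤ ∑ g ∈ T.childEdges e.val, f g := maxFlow_le_sum_childEdges cap
  set θ : T.Edge → ℝ := fun e => T.splitFlow f e
  have hθ : T.IsFlow θ := isFlow_splitFlow hf
  have hstrength : ∑ e ∈ T.edgesAt 1, θ e = ∑ e ∈ T.edgesAt 1, (f e : ℝ) :=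
    Finset.sum_congr rfl fun e he => by
      simp only [θ, splitFlow_of_egen_eq_one (mem_edgesAt.1 he)]
  have hpos : 0 < ∑ e ∈ T.edgesAt 1, θ e := by
    rw [hstrength, ← NNReal.coe_sum, NNReal.coe_pos, ← ENNReal.coe_pos]
    -- `ENNReal.ofReal x` is `↑x.toNNReal` by definition, so `hinf` is about `cap`.
    exact hinf.trans_le (iInf_isCutset_le_sum_maxFlow cap)
  have hle_one : ∑ e ∈ T.edgesAt 1, θ e ≤ 1 := by
    rw [hstrength, ← husum, tsum_subtype_eq_sum_of_iff _ (fun _ => mem_edgesAt) u]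
    refine Finset.sum_le_sum fun e he => (NNReal.coe_le_coe.2 (maxFlow_le_cap cap e)).trans ?_
    simp [cap, conductance, mem_edgesAt.1 he, (hu e).le]
  refine ⟨θ, hθ, fun h0 => hpos.ne' (by simp [h0]), ?_⟩
  calc T.energy (T.conductance w d) θ
      ≤ ENNReal.ofReal (∑ e ∈ T.edgesAt 1, θ e) * limsup (T.maxPathSum u) atTop :=
        hθ.energy_le (fun e => (hu e).le) fun e =>
          (NNReal.coe_le_coe.2 ((splitFlow_le hf e).trans (maxFlow_le_cap cap e))).trans_eq
            (Real.coe_toNNReal' _)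
    _ ≤ limsup (T.maxPathSum u) atTop := mul_le_of_le_one_left' (ENNReal.ofReal_le_one.2 hle_one)

/-- Equip `𝒢` with the conductances `c(e) = 1` for `|e| = 1` and
`c(e) = Ψ(e)/(1-ψ(e))` for `|e| > 1` coming from weights `(w_e, δ_e)` (with `ψ(e) < 1` for
`|e| > 1`).  For any positive `(u_e)` with `Σ_{|e|=1} u_e = 1` and
`inf_{π∈Π} Σ_{e∈π} u_e c(e) > 0`, there is a nonzero flow from the root to infinity whose
energy is at most `lim_{n→∞} max_{|e|=n} Σ_{g≤e} u_g`. -/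
theorem stmt11 (T : RTree) (w d : T.Edge → ℝ)
    (hw : ∀ e, 0 < w e) (hd : ∀ e, 0 < d e)
    (hpsi : ∀ e : T.Edge, 1 < T.egen e → T.psi w d e < 1)
    (u : T.Edge → ℝ) (hu : ∀ e, 0 < u e)
    (husum : (∑' e : {e : T.Edge // T.egen e = 1}, u e.val) = 1)
    (hinf : 0 < ⨅ (π : Set T.Edge) (_ : T.IsCutset π),
        ∑' e : π, ENNReal.ofReal (u e.val * T.conductance w d e.val)) :
    ∃ θ : T.Edge → ℝ, T.IsFlow θ ∧ θ ≠ 0 ∧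
      T.energy (T.conductance w d) θ ≤
        Filter.limsup (fun n : ℕ =>
          ⨆ (e : T.Edge) (_ : T.egen e = n),
            ∑' g : {g : T.Edge // T.edgeLE g e}, ENNReal.ofReal (u g.val))
          Filter.atTop :=
  stmt11_general T w d u hu husum hinf
end

section
/- Fix a real number λ > 1. For every function f : ℕ → [0,1] with f(0) = 1, one has Σ_{n=0}^{∞} f(n) · Π_{i=1}^{n} (1 − f(i))^{λ−1} ≤ (λ+2)/(λ−1). -/
/-!
Put `s = λ - 1` and `P n = ∏_{i=1}^n (1 - f i)^s`. From `(1 - x)^s ≤ e^{-sx} ≤ 1/(1 + sx)` one gets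
`x (1 - x)^s ≤ (1 - (1 - x)^s) / s`, so `f (n+1) P (n+1) ≤ (P n - P (n+1)) / s`. The series therefore
telescopes: its partial sums are at most `f 0 + P 0 / s ≤ 1 + 1/s = λ/(λ - 1)`.
-/

open Finset Real

theorem one_sub_rpow_mul_one_add_mul_le_one {s x : ℝ} (hs : 0 ≤ s) (hx0 : 0 ≤ x) (hx1 : x ≤ 1) :
    (1 - x) ^ s * (1 + s * x) ≤ 1 := by
  have hexp : (1 - x) ^ s ≤ exp (-(s * x)) := calc
    (1 - x) ^ s ≤ exp (-x) ^ s := rpow_le_rpow (by linarith) (by linarith [add_one_le_exp (-x)]) hs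
    _ = exp (-(s * x)) := by rw [← exp_mul]; ring_nf
  calc (1 - x) ^ s * (1 + s * x) ≤ exp (-(s * x)) * exp (s * x) := by
        have : 0 ≤ 1 + s * x := by positivity
        exact mul_le_mul hexp (by linarith [add_one_le_exp (s * x)]) this (exp_pos _).le
    _ = 1 := by rw [← exp_add, neg_add_cancel, exp_zero]

theorem mul_one_sub_rpow_le {s x : ℝ} (hs : 0 < s) (hx0 : 0 ≤ x) (hx1 : x ≤ 1) :
    x * (1 - x) ^ s ≤ (1 - (1 - x) ^ s) / s := by
  rw [le_div_iff₀ hs]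
  linarith [one_sub_rpow_mul_one_add_mul_le_one hs.le hx0 hx1]

theorem sum_range_le_mul_of_le_mul_sub {a b : ℕ → ℝ} {c : ℝ} (hc : 0 ≤ c) (hb : ∀ n, 0 ≤ b n)
    (h : ∀ n, a n ≤ c * (b n - b (n + 1))) (N : ℕ) : ∑ n ∈ range N, a n ≤ c * b 0 := calc
  ∑ n ∈ range N, a n ≤ ∑ n ∈ range N, c * (b n - b (n + 1)) := sum_le_sum fun n _ => h n
  _ = c * (b 0 - b N) := by rw [← mul_sum, sum_range_sub']
  _ ≤ c * b 0 := by nlinarith [hb N]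

section

variable {s : ℝ} {f : ℕ → ℝ}

theorem prod_one_sub_rpow_nonneg (hf : ∀ n, f n ∈ Set.Icc (0 : ℝ) 1) (n : ℕ) :
    0 ≤ ∏ i ∈ Icc 1 n, (1 - f i) ^ s :=
  prod_nonneg fun i _ => rpow_nonneg (by linarith [(hf i).2]) s

theorem sum_range_mul_prod_one_sub_rpow_le (hs : 0 < s) (hf : ∀ n, f n ∈ Set.Icc (0 : ℝ) 1)
    (N : ℕ) : ∑ n ∈ range N, f n * ∏ i ∈ Icc 1 n, (1 - f i) ^ s ≤ 1 + 1 / s := by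
  set P : ℕ → ℝ := fun n => ∏ i ∈ Icc 1 n, (1 - f i) ^ s
  have hP : ∀ n, 0 ≤ P n := prod_one_sub_rpow_nonneg hf
  have hstep : ∀ n, f (n + 1) * P (n + 1) ≤ 1 / s * (P n - P (n + 1)) := by
    intro n
    have hPsucc : P (n + 1) = P n * (1 - f (n + 1)) ^ s := prod_Icc_succ_top (by omega) _
    rw [hPsucc]
    calc f (n + 1) * (P n * (1 - f (n + 1)) ^ s)
        = P n * (f (n + 1) * (1 - f (n + 1)) ^ s) := by ring
      _ ≤ P n * ((1 - (1 - f (n + 1)) ^ s) / s) :=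
        mul_le_mul_of_nonneg_left (mul_one_sub_rpow_le hs (hf (n + 1)).1 (hf (n + 1)).2) (hP n)
      _ = 1 / s * (P n - P n * (1 - f (n + 1)) ^ s) := by ring
  cases N with
  | zero => simp only [range_zero, sum_empty]; positivity
  | succ N =>
    have hP0 : P 0 = 1 := by simp [P]
    have htail := sum_range_le_mul_of_le_mul_sub (by positivity) hP hstep N
    rw [hP0, mul_one] at htail
    rw [sum_range_succ']
    change ∑ n ∈ range N, f (n + 1) * P (n + 1) + f 0 * P 0 ≤ 1 + 1 / s
    rw [hP0, mul_one]
    linarith [(hf 0).2]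

end

theorem stmt12_general (lam : ℝ) (hlam : 1 < lam) (f : ℕ → ℝ)
    (hf : ∀ n, f n ∈ Set.Icc (0 : ℝ) 1) :
    (∑' n : ℕ, ENNReal.ofReal
        (f n * ∏ i ∈ Finset.Icc 1 n, (1 - f i) ^ (lam - 1))) ≤
      ENNReal.ofReal ((lam + 2) / (lam - 1)) := by
  have hs : 0 < lam - 1 := by linarith
  have hbound : 1 + 1 / (lam - 1) ≤ (lam + 2) / (lam - 1) := by
    rw [one_add_div hs.ne']
    exact div_le_div_of_nonneg_right (by linarith) hs.le
  refine ENNReal.tsum_le_of_sum_range_le fun N => ?_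
  rw [← ENNReal.ofReal_sum_of_nonneg fun n _ => mul_nonneg (hf n).1 (prod_one_sub_rpow_nonneg hf n)]
  exact ENNReal.ofReal_le_ofReal ((sum_range_mul_prod_one_sub_rpow_le hs hf N).trans hbound)

/-- For `λ > 1` and any `f : ℕ → [0,1]` with `f 0 = 1`,
`Σ_{n=0}^∞ f(n) Π_{i=1}^n (1 - f(i))^{λ-1} ≤ (λ+2)/(λ-1)`. -/
theorem stmt12 (lam : ℝ) (hlam : 1 < lam) (f : ℕ → ℝ)
    (hf : ∀ n, f n ∈ Set.Icc (0 : ℝ) 1) (hf0 : f 0 = 1) :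
    (∑' n : ℕ, ENNReal.ofReal
        (f n * ∏ i ∈ Finset.Icc 1 n, (1 - f i) ^ (lam - 1))) ≤
      ENNReal.ofReal ((lam + 2) / (lam - 1)) :=
  stmt12_general lam hlam f hf
end

section
/- Fix a real number λ > 1. For every function f : ℕ → [0,1] with f(0) = 1, one has Σ_{n=0}^{∞} f(n) · exp(−(λ−1) Σ_{i=0}^{n} f(i)) ≤ 1 + 3/(λ−1). -/
/-!
With `c = λ - 1` and `S n = Σ_{i<n} f i`, the inequality `1 + x ≤ e^x` at `x = c f(n)` bounds
the `n`-th term by `(e^{-c S n} - e^{-c S (n+1)}) / c`. The series therefore telescopes to at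
most `e^{-c S 0} / c = 1 / c`, which is below `1 + 3 / c`.
-/

open Finset Real

theorem mul_exp_neg_le_one_sub_exp_neg (x : ℝ) : x * exp (-x) ≤ 1 - exp (-x) := by
  have h := mul_le_mul_of_nonneg_right (add_one_le_exp x) (exp_pos (-x)).le
  rw [← exp_add, add_neg_cancel, exp_zero] at h
  linarith

theorem mul_mul_exp_neg_mul_add_le (c s a : ℝ) :
    c * a * exp (-c * (s + a)) ≤ exp (-c * s) - exp (-c * (s + a)) := by
  have hsplit : exp (-c * (s + a)) = exp (-c * s) * exp (-(c * a)) := by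
    rw [← exp_add]; ring_nf
  rw [hsplit]
  have := mul_le_mul_of_nonneg_left (mul_exp_neg_le_one_sub_exp_neg (c * a)) (exp_pos (-c * s)).le
  linarith

theorem sum_range_mul_mul_exp_neg_partialSum_le_one (c : ℝ) (f : ℕ → ℝ) (N : ℕ) :
    ∑ n ∈ range N, c * f n * exp (-c * ∑ i ∈ range (n + 1), f i) ≤ 1 := by
  set g : ℕ → ℝ := fun n => exp (-c * ∑ i ∈ range n, f i)
  calc ∑ n ∈ range N, c * f n * exp (-c * ∑ i ∈ range (n + 1), f i)
      ≤ ∑ n ∈ range N, (g n - g (n + 1)) := by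
        gcongr with n
        simpa only [g, sum_range_succ] using mul_mul_exp_neg_mul_add_le c _ (f n)
    _ = g 0 - g N := sum_range_sub' g N
    _ ≤ 1 := by
        simp only [g, range_zero, sum_empty, mul_zero, exp_zero]
        linarith [exp_pos (-c * ∑ i ∈ range N, f i)]

theorem stmt13_general (lam : ℝ) (hlam : 1 < lam) (f : ℕ → ℝ)
    (hf : ∀ n, f n ∈ Set.Icc (0 : ℝ) 1) :
    (∑' n : ℕ, ENNReal.ofReal
        (f n * Real.exp (-(lam - 1) * ∑ i ∈ Finset.range (n + 1), f i))) ≤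
      ENNReal.ofReal (1 + 3 / (lam - 1)) := by
  have hc : 0 < lam - 1 := sub_pos.mpr hlam
  refine ENNReal.tsum_le_of_sum_range_le fun N => ?_
  rw [← ENNReal.ofReal_sum_of_nonneg fun n _ => mul_nonneg (hf n).1 (exp_pos _).le]
  refine ENNReal.ofReal_le_ofReal ?_
  have hpartial := sum_range_mul_mul_exp_neg_partialSum_le_one (lam - 1) f N
  simp only [mul_assoc, ← mul_sum] at hpartial
  calc ∑ n ∈ range N, f n * exp (-(lam - 1) * ∑ i ∈ range (n + 1), f i)
      ≤ 1 / (lam - 1) := by rw [le_div_iff₀ hc]; linarith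
    _ ≤ 1 + 3 / (lam - 1) := by
        have : 1 / (lam - 1) ≤ 3 / (lam - 1) := by gcongr; norm_num
        linarith

/-- For `λ > 1` and any `f : ℕ → [0,1]` with `f 0 = 1`,
`Σ_{n=0}^∞ f(n) exp(-(λ-1) Σ_{i=0}^n f(i)) ≤ 1 + 3/(λ-1)`. -/
theorem stmt13 (lam : ℝ) (hlam : 1 < lam) (f : ℕ → ℝ)
    (hf : ∀ n, f n ∈ Set.Icc (0 : ℝ) 1) (hf0 : f 0 = 1) :
    (∑' n : ℕ, ENNReal.ofReal
        (f n * Real.exp (-(lam - 1) * ∑ i ∈ Finset.range (n + 1), f i))) ≤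
      ENNReal.ofReal (1 + 3 / (lam - 1)) :=
  stmt13_general lam hlam f hf
end

section
/- Let (w_k)_{k≥1} and (d_k)_{k≥1} be sequences of positive reals and M ∈ (1,∞) such that 1/M ≤ (Σ_{k=1}^{n} d_k^{−1})/(Σ_{k=1}^{n} w_k^{−1}) ≤ M for every n ≥ 1. Fix m ≥ 1 and set p^{−1} = Σ_{k=1}^{m} d_k^{−1}. Then for every N > m, Π_{n=m+1}^{N} ( 1 + p^{−1} w_n^{−1} / ( (p^{−1} + Σ_{k=m+1}^{n−1} d_k^{−1}) · (2p^{−1} + Σ_{k=m+1}^{n−1} d_k^{−1} + w_n^{−1}) ) ) ≤ exp(M³). -/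
/-!
Write `a = d⁻¹`, `b = w⁻¹` and `A n`, `B n` for their partial sums, so that `p⁻¹ = A m` and the
`n`-th factor is `1 + A m b n / (A (n-1) (A (n-1) + A m + b n))`. Since `B (n-1) ≤ M A (n-1)` and
`B n = B (n-1) + b n ≤ M (A (n-1) + A m + b n)`, the `n`-th increment is at
most `A m M² b n / (B (n-1) B n) = A m M² (B (n-1)⁻¹ - B n⁻¹)`. The sum of the increments telescopes
to at most `A m M² / B m ≤ M³`, and `∏ (1 + xₙ) ≤ exp (∑ xₙ)`.
-/

open Finset

lemma sum_Icc_one_add_sum_Icc_succ {G : Type*} [AddCommMonoid G] (f : ℕ → G) {m n : ℕ}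
    (h : m ≤ n) : ∑ k ∈ Icc 1 m, f k + ∑ k ∈ Icc (m + 1) n, f k = ∑ k ∈ Icc 1 n, f k := by
  simpa only [← Icc_add_one_left_eq_Ioc, zero_add] using sum_Ioc_consecutive f (Nat.zero_le m) h

lemma sum_Icc_succ_sub_pred {G : Type*} [AddCommGroup G] (g : ℕ → G) {m N : ℕ} (h : m ≤ N) :
    ∑ n ∈ Icc (m + 1) N, (g (n - 1) - g n) = g m - g N := by
  induction N, h using Nat.le_induction with
  | base => simp
  | succ N hmN ih =>
    rw [sum_Icc_succ_top (by omega), ih, Nat.add_sub_cancel]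
    abel

lemma mul_div_le_mul_sq_mul_inv_sub_inv {M P S x a : ℝ} (hM : 1 ≤ M) (hP : 0 ≤ P) (hx : 0 ≤ x)
    (ha : 0 < a) (haS : a ≤ M * (P + S)) :
    P * x / ((P + S) * (2 * P + S + x)) ≤ P * M ^ 2 * (a⁻¹ - (a + x)⁻¹) := by
  have hPS : 0 < P + S := pos_of_mul_pos_right (ha.trans_le haS) (by linarith)
  have hax : a + x ≤ M * (2 * P + S + x) := by nlinarith
  have hax₀ : 0 < a + x := by linarith
  rw [inv_sub_inv ha.ne' hax₀.ne', add_sub_cancel_left, mul_div_assoc',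
    div_le_div_iff₀ (mul_pos hPS (by linarith)) (mul_pos ha hax₀)]
  have hden : a * (a + x) ≤ M ^ 2 * ((P + S) * (2 * P + S + x)) := by
    rw [sq, mul_mul_mul_comm]
    exact mul_le_mul haS hax (by positivity) (by positivity)
  calc P * x * (a * (a + x)) ≤ P * x * (M ^ 2 * ((P + S) * (2 * P + S + x))) := by gcongr
    _ = P * M ^ 2 * x * ((P + S) * (2 * P + S + x)) := by ring

lemma prod_one_add_le_exp_sum_of_nonneg {ι : Type*} (s : Finset ι) {f : ι → ℝ}
    (hf : ∀ i ∈ s, 0 ≤ f i) : ∏ i ∈ s, (1 + f i) ≤ Real.exp (∑ i ∈ s, f i) := by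
  rw [Real.exp_sum]
  exact prod_le_prod (fun i hi ↦ by linarith [hf i hi])
    fun i _ ↦ by linarith [Real.add_one_le_exp (f i)]

lemma sum_Icc_one_pos {b : ℕ → ℝ} (hb : ∀ k, 1 ≤ k → 0 < b k) {n : ℕ} (hn : 1 ≤ n) :
    0 < ∑ k ∈ Icc 1 n, b k :=
  sum_pos (fun k hk ↦ hb k (mem_Icc.1 hk).1) ⟨1, mem_Icc.2 ⟨le_rfl, hn⟩⟩

noncomputable def increment (a b : ℕ → ℝ) (m n : ℕ) : ℝ :=
  (∑ k ∈ Icc 1 m, a k) * b n /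
    ((∑ k ∈ Icc 1 m, a k + ∑ k ∈ Icc (m + 1) (n - 1), a k) *
      (2 * ∑ k ∈ Icc 1 m, a k + ∑ k ∈ Icc (m + 1) (n - 1), a k + b n))

section Increment

variable {a b : ℕ → ℝ} {M : ℝ} {m : ℕ}

lemma sum_Icc_one_pos_of_le_mul (hm : 1 ≤ m) (hb : ∀ k, 1 ≤ k → 0 < b k)
    (hba : ∀ n, m ≤ n → ∑ k ∈ Icc 1 n, b k ≤ M * ∑ k ∈ Icc 1 n, a k) (hM : 0 < M)
    {n : ℕ} (hn : m ≤ n) : 0 < ∑ k ∈ Icc 1 n, a k :=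
  pos_of_mul_pos_right ((sum_Icc_one_pos hb (hm.trans hn)).trans_le (hba n hn)) hM.le

lemma increment_nonneg (hm : 1 ≤ m) (hb : ∀ k, 1 ≤ k → 0 < b k)
    (hba : ∀ n, m ≤ n → ∑ k ∈ Icc 1 n, b k ≤ M * ∑ k ∈ Icc 1 n, a k) (hM : 0 < M)
    {n : ℕ} (hn : m + 1 ≤ n) : 0 ≤ increment a b m n := by
  have hP := sum_Icc_one_pos_of_le_mul hm hb hba hM le_rfl
  have hA := sum_Icc_one_pos_of_le_mul hm hb hba hM (by omega : m ≤ n - 1)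
  have hbn := hb n (by omega)
  rw [← sum_Icc_one_add_sum_Icc_succ a (by omega : m ≤ n - 1)] at hA
  unfold increment
  exact div_nonneg (by positivity) (mul_nonneg hA.le (by linarith))

lemma increment_le (hm : 1 ≤ m) (hb : ∀ k, 1 ≤ k → 0 < b k)
    (hba : ∀ n, m ≤ n → ∑ k ∈ Icc 1 n, b k ≤ M * ∑ k ∈ Icc 1 n, a k) (hM : 1 ≤ M)
    {n : ℕ} (hn : m + 1 ≤ n) :
    increment a b m n ≤
      (∑ k ∈ Icc 1 m, a k) * M ^ 2 * ((∑ k ∈ Icc 1 (n - 1), b k)⁻¹ - (∑ k ∈ Icc 1 n, b k)⁻¹) := by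
  obtain ⟨j, rfl⟩ : ∃ j, n = j + 1 := ⟨n - 1, by omega⟩
  rw [increment, Nat.add_sub_cancel, sum_Icc_succ_top (by omega)]
  have hmj : m ≤ j := by omega
  refine mul_div_le_mul_sq_mul_inv_sub_inv hM
    (sum_Icc_one_pos_of_le_mul hm hb hba (by linarith) le_rfl).le (hb _ (by omega)).le
    (sum_Icc_one_pos hb (hm.trans hmj)) ?_
  rw [sum_Icc_one_add_sum_Icc_succ a hmj]
  exact hba j hmj

lemma sum_increment_le (hm : 1 ≤ m) (hb : ∀ k, 1 ≤ k → 0 < b k)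
    (hba : ∀ n, m ≤ n → ∑ k ∈ Icc 1 n, b k ≤ M * ∑ k ∈ Icc 1 n, a k) (hM : 1 ≤ M)
    (hab : ∑ k ∈ Icc 1 m, a k ≤ M * ∑ k ∈ Icc 1 m, b k) {N : ℕ} (hN : m ≤ N) :
    ∑ n ∈ Icc (m + 1) N, increment a b m n ≤ M ^ 3 := by
  set P := ∑ k ∈ Icc 1 m, a k
  have hP : 0 < P := sum_Icc_one_pos_of_le_mul hm hb hba (by linarith) le_rfl
  have hBm := sum_Icc_one_pos hb hm
  have hBN := sum_Icc_one_pos hb (hm.trans hN)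
  calc ∑ n ∈ Icc (m + 1) N, increment a b m n
      ≤ ∑ n ∈ Icc (m + 1) N, P * M ^ 2 *
          ((∑ k ∈ Icc 1 (n - 1), b k)⁻¹ - (∑ k ∈ Icc 1 n, b k)⁻¹) :=
        sum_le_sum fun n hn ↦ increment_le hm hb hba hM (mem_Icc.1 hn).1
    _ = P * M ^ 2 * ((∑ k ∈ Icc 1 m, b k)⁻¹ - (∑ k ∈ Icc 1 N, b k)⁻¹) := by
        rw [← mul_sum, sum_Icc_succ_sub_pred (fun n ↦ (∑ k ∈ Icc 1 n, b k)⁻¹) hN]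
    _ ≤ P * M ^ 2 * (∑ k ∈ Icc 1 m, b k)⁻¹ :=
        mul_le_mul_of_nonneg_left (sub_le_self _ (inv_nonneg.2 hBN.le))
          (mul_nonneg hP.le (sq_nonneg M))
    _ = P / (∑ k ∈ Icc 1 m, b k) * M ^ 2 := by ring
    _ ≤ M * M ^ 2 := by gcongr; exact div_le_of_le_mul₀ hBm.le (by linarith) hab
    _ = M ^ 3 := by ring

end Increment

theorem stmt16_general (w d : ℕ → ℝ) (hw : ∀ k, 1 ≤ k → 0 < w k)
    (M : ℝ) (hM : 1 < M)
    (hcond : ∀ n : ℕ, 1 ≤ n →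
      1 / M ≤ (∑ k ∈ Finset.Icc 1 n, (d k)⁻¹) / (∑ k ∈ Finset.Icc 1 n, (w k)⁻¹) ∧
      (∑ k ∈ Finset.Icc 1 n, (d k)⁻¹) / (∑ k ∈ Finset.Icc 1 n, (w k)⁻¹) ≤ M)
    (m : ℕ) (hm : 1 ≤ m) :
    ∀ N : ℕ, m < N →
      (∏ n ∈ Finset.Icc (m + 1) N,
        (1 + (∑ k ∈ Finset.Icc 1 m, (d k)⁻¹) * (w n)⁻¹ /
          (((∑ k ∈ Finset.Icc 1 m, (d k)⁻¹) + ∑ k ∈ Finset.Icc (m + 1) (n - 1), (d k)⁻¹) *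
           (2 * (∑ k ∈ Finset.Icc 1 m, (d k)⁻¹) +
             (∑ k ∈ Finset.Icc (m + 1) (n - 1), (d k)⁻¹) + (w n)⁻¹)))) ≤
      Real.exp (M ^ 3) := by
  intro N hN
  have hb : ∀ k, 1 ≤ k → 0 < (w k)⁻¹ := fun k hk ↦ inv_pos.2 (hw k hk)
  have hba : ∀ n, m ≤ n → ∑ k ∈ Icc 1 n, (w k)⁻¹ ≤ M * ∑ k ∈ Icc 1 n, (d k)⁻¹ := by
    intro n hn
    have h := (hcond n (hm.trans hn)).1
    rw [div_le_div_iff₀ (by linarith) (sum_Icc_one_pos hb (hm.trans hn))] at h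
    linarith
  have hab : ∑ k ∈ Icc 1 m, (d k)⁻¹ ≤ M * ∑ k ∈ Icc 1 m, (w k)⁻¹ :=
    (div_le_iff₀ (sum_Icc_one_pos hb hm)).1 (hcond m hm).2
  calc ∏ n ∈ Icc (m + 1) N, (1 + increment (fun k ↦ (d k)⁻¹) (fun k ↦ (w k)⁻¹) m n)
      ≤ Real.exp (∑ n ∈ Icc (m + 1) N, increment (fun k ↦ (d k)⁻¹) (fun k ↦ (w k)⁻¹) m n) :=
        prod_one_add_le_exp_sum_of_nonneg _ fun n hn ↦
          increment_nonneg hm hb hba (by linarith) (mem_Icc.1 hn).1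
    _ ≤ Real.exp (M ^ 3) := Real.exp_le_exp.2 (sum_increment_le hm hb hba hM.le hab hN.le)

/-- Let `(w_k)`, `(d_k)` be positive sequences and `M ∈ (1,∞)` with
`1/M ≤ (Σ_{k=1}^n d_k⁻¹)/(Σ_{k=1}^n w_k⁻¹) ≤ M` for all `n ≥ 1`.  Fix `m ≥ 1` and set
`p⁻¹ = Σ_{k=1}^m d_k⁻¹`.  Then for every `N > m`,
`Π_{n=m+1}^N (1 + p⁻¹ w_n⁻¹ / ((p⁻¹ + Σ_{k=m+1}^{n-1} d_k⁻¹)(2p⁻¹ + Σ_{k=m+1}^{n-1} d_k⁻¹ + w_n⁻¹))) ≤ exp(M³)`. -/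
theorem stmt16 (w d : ℕ → ℝ) (hw : ∀ k, 1 ≤ k → 0 < w k) (hd : ∀ k, 1 ≤ k → 0 < d k)
    (M : ℝ) (hM : 1 < M)
    (hcond : ∀ n : ℕ, 1 ≤ n →
      1 / M ≤ (∑ k ∈ Finset.Icc 1 n, (d k)⁻¹) / (∑ k ∈ Finset.Icc 1 n, (w k)⁻¹) ∧
      (∑ k ∈ Finset.Icc 1 n, (d k)⁻¹) / (∑ k ∈ Finset.Icc 1 n, (w k)⁻¹) ≤ M)
    (m : ℕ) (hm : 1 ≤ m) :
    ∀ N : ℕ, m < N →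
      (∏ n ∈ Finset.Icc (m + 1) N,
        (1 + (∑ k ∈ Finset.Icc 1 m, (d k)⁻¹) * (w n)⁻¹ /
          (((∑ k ∈ Finset.Icc 1 m, (d k)⁻¹) + ∑ k ∈ Finset.Icc (m + 1) (n - 1), (d k)⁻¹) *
           (2 * (∑ k ∈ Finset.Icc 1 m, (d k)⁻¹) +
             (∑ k ∈ Finset.Icc (m + 1) (n - 1), (d k)⁻¹) + (w n)⁻¹)))) ≤
      Real.exp (M ^ 3) :=
  stmt16_general w d hw M hM hcond m hm
end

section
/- Fix β > 1 and δ > 0, and define ψ_1 = 1 and, for n ≥ 2, ψ_n = (Σ_{k=1}^{n−1} β^k/δ) / (β^n + Σ_{k=1}^{n−1} β^k/δ). Then there exist constants c₄, c₅ ∈ (0,∞) such that for every n ≥ 1, c₄ · (δ(β−1)+1)^{−n} ≤ Π_{k=1}^{n} ψ_k ≤ c₅ · (δ(β−1)+1)^{−n}. -/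
/-!
Summing the geometric series gives `ψ (k + 2) = (t - 1) / (A t - 1)` with `t = β ^ (k + 1)` and
`A = δ (β - 1) + 1`. So `A ψ (k + 2) ≤ 1`, while `(A ψ (k + 2))⁻¹ - 1 = (A - 1) / (A (t - 1))`
is at most `C β⁻¹ ^ k` with `C = (A - 1) / (A (β - 1))`; since `1 + x ≤ exp x`, the product of
the `A ψ (k + 2)` stays above `exp (-C / (1 - β⁻¹))`. Hence `∏ ψ k` is `A ^ (-n)` up to a factor in
`[A exp (-C / (1 - β⁻¹)), A]`.
-/

open Finset Real

theorem sum_Icc_one_pow_div {β : ℝ} (hβ : β ≠ 1) (δ : ℝ) (n : ℕ) :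
    ∑ k ∈ Icc 1 n, β ^ k / δ = (β ^ (n + 1) - β) / ((β - 1) * δ) := by
  rw [← sum_div, ← Ico_add_one_right_eq_Icc, geom_sum_Ico hβ (by omega), pow_one, div_div]

theorem sum_pow_div_div_pow_add_sum_pow_div {β δ : ℝ} (hβ : 1 < β) (hδ : 0 < δ) (n : ℕ) :
    (∑ k ∈ Icc 1 n, β ^ k / δ) / (β ^ (n + 1) + ∑ k ∈ Icc 1 n, β ^ k / δ) =
      (β ^ n - 1) / ((δ * (β - 1) + 1) * β ^ n - 1) := by
  have hβ₀ : 0 < β := by linarith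
  have hβ₁ : 0 < β - 1 := sub_pos.2 hβ
  have hpow : 1 ≤ β ^ n := one_le_pow₀ hβ.le
  have hden : 0 < (δ * (β - 1) + 1) * β ^ n - 1 := by nlinarith [mul_pos hδ hβ₁]
  have hsum : 0 ≤ β ^ (n + 1) - β := by
    rw [pow_succ']
    nlinarith
  rw [sum_Icc_one_pow_div hβ.ne', div_eq_div_iff (by positivity) hden.ne']
  field_simp
  ring

theorem mul_sub_one_div_mem_Ioc {A t : ℝ} (hA : 1 < A) (ht : 1 < t) :
    A * ((t - 1) / (A * t - 1)) ∈ Set.Ioc 0 1 := by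
  have hden : 0 < A * t - 1 := by nlinarith
  refine ⟨mul_pos (by linarith) (div_pos (by linarith) hden), ?_⟩
  rw [mul_div_assoc', div_le_one hden]
  linarith

theorem inv_mul_sub_one_div_sub_one {A t : ℝ} (hA : 1 < A) (ht : 1 < t) :
    (A * ((t - 1) / (A * t - 1)))⁻¹ - 1 = (A - 1) / (A * (t - 1)) := by
  have : A * t - 1 ≠ 0 := by nlinarith
  have : t - 1 ≠ 0 := by linarith
  have : A ≠ 0 := by linarith
  field_simp
  ring

theorem sub_one_div_pow_succ_sub_one_le {β : ℝ} (hβ : 1 < β) (k : ℕ) :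
    (β - 1) / (β ^ (k + 1) - 1) ≤ β⁻¹ ^ k := by
  have hpow : 1 ≤ β ^ k := one_le_pow₀ hβ.le
  rw [inv_pow, div_le_iff₀ (by rw [pow_succ]; nlinarith), ← div_eq_inv_mul,
    le_div_iff₀ (by positivity), pow_succ]
  nlinarith

theorem inv_mul_pow_sub_one_div_sub_one_le {A β : ℝ} (hA : 1 < A) (hβ : 1 < β) (k : ℕ) :
    (A * ((β ^ (k + 1) - 1) / (A * β ^ (k + 1) - 1)))⁻¹ - 1 ≤
      (A - 1) / (A * (β - 1)) * β⁻¹ ^ k := by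
  have hβ₁ : 0 < β - 1 := sub_pos.2 hβ
  rw [inv_mul_sub_one_div_sub_one hA (one_lt_pow₀ hβ k.succ_ne_zero)]
  calc (A - 1) / (A * (β ^ (k + 1) - 1))
      = (A - 1) / (A * (β - 1)) * ((β - 1) / (β ^ (k + 1) - 1)) := by
        field_simp
    _ ≤ (A - 1) / (A * (β - 1)) * β⁻¹ ^ k := by
        gcongr
        exact sub_one_div_pow_succ_sub_one_le hβ k

theorem exp_neg_le_of_inv_sub_one_le {a x : ℝ} (ha : 0 < a) (h : a⁻¹ - 1 ≤ x) :
    exp (-x) ≤ a := by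
  rw [exp_neg, inv_le_comm₀ (exp_pos x) ha]
  linarith [add_one_le_exp x]

theorem exp_neg_div_one_sub_le_prod {a : ℕ → ℝ} {C r : ℝ} (hC : 0 ≤ C) (hr₀ : 0 ≤ r)
    (hr₁ : r < 1) (ha : ∀ k, 0 < a k) (h : ∀ k, (a k)⁻¹ - 1 ≤ C * r ^ k) (m : ℕ) :
    exp (-(C / (1 - r))) ≤ ∏ k ∈ range m, a k := by
  have hgeom : ∑ k ∈ range m, C * r ^ k ≤ C / (1 - r) := by
    rw [← mul_sum, range_eq_Ico, ← mul_one_div]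
    exact mul_le_mul_of_nonneg_left
      (by simpa using geom_sum_Ico_le_of_lt_one (m := 0) (n := m) hr₀ hr₁) hC
  calc exp (-(C / (1 - r))) ≤ exp (-∑ k ∈ range m, C * r ^ k) := exp_le_exp.2 (neg_le_neg hgeom)
    _ = ∏ k ∈ range m, exp (-(C * r ^ k)) := by rw [← sum_neg_distrib, exp_sum]
    _ ≤ ∏ k ∈ range m, a k :=
      prod_le_prod (fun k _ => (exp_pos _).le) fun k _ => exp_neg_le_of_inv_sub_one_le (ha k) (h k)

theorem prod_Icc_one_succ (f : ℕ → ℝ) (m : ℕ) :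
    ∏ k ∈ Icc 1 (m + 1), f k = f 1 * ∏ k ∈ range m, f (k + 2) := by
  rw [← Ico_add_one_right_eq_Icc, prod_Ico_eq_prod_range, Nat.add_sub_cancel, prod_range_succ',
    mul_comm, add_zero]
  congr 1
  exact prod_congr rfl fun k _ => by rw [add_comm 1, add_assoc]

theorem mul_zpow_neg_succ {A : ℝ} (hA : A ≠ 0) (c : ℝ) (m : ℕ) :
    c * A ^ (-((m + 1 : ℕ) : ℤ)) = (A ^ m)⁻¹ * (c / A) := by
  rw [zpow_neg, zpow_natCast, pow_succ]
  field_simp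

/-- Fix `β > 1`, `δ > 0` and let `ψ_1 = 1` and, for `n ≥ 2`,
`ψ_n = (Σ_{k=1}^{n-1} β^k/δ)/(β^n + Σ_{k=1}^{n-1} β^k/δ)`.  Then there are constants
`c₄, c₅ ∈ (0,∞)` with `c₄ (δ(β-1)+1)^{-n} ≤ Π_{k=1}^n ψ_k ≤ c₅ (δ(β-1)+1)^{-n}` for all
`n ≥ 1`. -/
theorem stmt18 (β δ : ℝ) (hβ : 1 < β) (hδ : 0 < δ) (ψ : ℕ → ℝ)
    (hψ1 : ψ 1 = 1)
    (hψ : ∀ n : ℕ, 2 ≤ n →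
      ψ n = (∑ k ∈ Finset.Icc 1 (n - 1), β ^ k / δ) /
            (β ^ n + ∑ k ∈ Finset.Icc 1 (n - 1), β ^ k / δ)) :
    ∃ c₄ c₅ : ℝ, 0 < c₄ ∧ 0 < c₅ ∧ ∀ n : ℕ, 1 ≤ n →
      c₄ * (δ * (β - 1) + 1) ^ (-(n : ℤ)) ≤ (∏ k ∈ Finset.Icc 1 n, ψ k) ∧
      (∏ k ∈ Finset.Icc 1 n, ψ k) ≤ c₅ * (δ * (β - 1) + 1) ^ (-(n : ℤ)) := by
  set A := δ * (β - 1) + 1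
  have hA : 1 < A := by nlinarith
  have hA₀ : 0 < A := by linarith
  have hψ_eq (k : ℕ) : ψ (k + 2) = (β ^ (k + 1) - 1) / (A * β ^ (k + 1) - 1) := by
    rw [hψ (k + 2) (by omega), ← sum_pow_div_div_pow_add_sum_pow_div hβ hδ]
    rfl
  have hmem (k : ℕ) : A * ψ (k + 2) ∈ Set.Ioc 0 1 := by
    rw [hψ_eq]
    exact mul_sub_one_div_mem_Ioc hA (one_lt_pow₀ hβ k.succ_ne_zero)
  have hinv (k : ℕ) : (A * ψ (k + 2))⁻¹ - 1 ≤ (A - 1) / (A * (β - 1)) * β⁻¹ ^ k := by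
    rw [hψ_eq]
    exact inv_mul_pow_sub_one_div_sub_one_le hA hβ k
  have hprod (m : ℕ) : ∏ k ∈ Icc 1 (m + 1), ψ k = (A ^ m)⁻¹ * ∏ k ∈ range m, A * ψ (k + 2) := by
    rw [prod_Icc_one_succ, hψ1, one_mul, prod_mul_distrib, prod_const, card_range,
      inv_mul_cancel_left₀ (pow_ne_zero m hA₀.ne')]
  have hβ₁ : 0 < β - 1 := sub_pos.2 hβ
  refine ⟨A * exp (-((A - 1) / (A * (β - 1)) / (1 - β⁻¹))), A, by positivity, hA₀,
    fun n hn => ?_⟩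
  obtain ⟨m, rfl⟩ := Nat.exists_eq_add_of_le' hn
  rw [hprod, mul_zpow_neg_succ hA₀.ne', mul_zpow_neg_succ hA₀.ne', mul_div_cancel_left₀ _ hA₀.ne',
    div_self hA₀.ne', mul_one]
  refine ⟨mul_le_mul_of_nonneg_left ?_ (by positivity), mul_le_of_le_one_right (by positivity) ?_⟩
  · exact exp_neg_div_one_sub_le_prod (div_nonneg (by linarith) (by positivity)) (by positivity)
      (inv_lt_one_of_one_lt₀ hβ) (fun k => (hmem k).1) hinv m
  · exact prod_le_one (fun k _ => (hmem k).1.le) fun k _ => (hmem k).2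
end
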